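/- For probability measures μ, ν on R with finite first moments, the infimum in the definition of W_1(μ,ν) is attained: the monotone coupling π_↑, defined as the law of (Q_μ(U), Q_ν(U)) with U uniform on (0,1), is an optimal coupling for the cost |x − y|. -/

import Mathlib

open MeasureTheory Set

/-- Generalized quantile (inverse CDF): `Q_F(u) = inf {x | F x ≥ u}`. -/
noncomputable def quantile (F : ℝ → ℝ) (u : ℝ) : ℝ := sInf {x | u ≤ F x}

/-- CDF of a real random variable `X` under `P`. -/
noncomputable def cdfRV {Ω : Type*} [MeasurableSpace Ω] (P : Measure Ω) (X : Ω → ℝ) (x : ℝ) : ℝ :=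
  (P {ω | X ω ≤ x}).toReal

/-- CDF of a measure on ℝ. -/
noncomputable def cdfOf (μ : Measure ℝ) (x : ℝ) : ℝ := (μ (Iic x)).toReal

/-- Uniform distribution on (0,1). -/
noncomputable def unif : Measure ℝ := volume.restrict (Ioo 0 1)

/-- 1-Wasserstein distance on ℝ: infimum over couplings of the expected distance. -/
noncomputable def W1 (μ ν : Measure ℝ) : ENNReal :=
  ⨅ π ∈ {π : Measure (ℝ × ℝ) | π.map Prod.fst = μ ∧ π.map Prod.snd = ν},
    ∫⁻ p, ENNReal.ofReal |p.1 - p.2| ∂π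

/-!
For `x y : ℝ`, `|x - y|` is the Lebesgue measure of the set of levels `t` at which exactly
one of `x ≤ t`, `y ≤ t` holds. By Tonelli, the cost of a coupling `π` of `μ` and `ν` is
therefore `∫ π{exactly one of x ≤ t, y ≤ t} dt`, and the integrand is at least
`|F_μ(t) - F_ν(t)|`, the difference of the probabilities of `{x ≤ t}` and `{y ≤ t}`.
For the monotone coupling this is an equality: for `u ∈ (0, 1)` one has
`Q_μ(u) ≤ t ↔ u ≤ F_μ(t)`, so the crossing event pulls back to the interval between
`F_μ(t)` and `F_ν(t)`. Hence its cost is the lower bound `∫ |F_μ - F_ν|`, which every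
coupling dominates.
-/

open Filter ProbabilityTheory
open scoped symmDiff

theorem quantile_le_iff {F : ℝ → ℝ} (hF : Monotone F)
    (hF_right : ∀ x, ContinuousWithinAt F (Ioi x) x) {u : ℝ}
    (hu_below : ∃ x, F x < u) (hu_above : ∃ x, u ≤ F x) {t : ℝ} :
    quantile F u ≤ t ↔ u ≤ F t := by
  have hbdd : BddBelow {x | u ≤ F x} := by
    obtain ⟨x₀, hx₀⟩ := hu_below
    exact ⟨x₀, fun y hy => le_of_lt (hF.reflect_lt (hx₀.trans_le hy))⟩
  refine ⟨fun h => ge_of_tendsto (hF_right t) ?_, fun h => csInf_le hbdd h⟩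
  filter_upwards [self_mem_nhdsWithin] with s hs
  obtain ⟨y, hy, hys⟩ := exists_lt_of_csInf_lt hu_above (h.trans_lt hs)
  exact le_trans hy (hF hys.le)

theorem cdfOf_eq_cdf (μ : Measure ℝ) [IsProbabilityMeasure μ] : cdfOf μ = cdf μ := by
  funext x
  rw [cdf_eq_real]
  rfl

theorem cdfOf_mem_Icc (μ : Measure ℝ) [IsProbabilityMeasure μ] (t : ℝ) : cdfOf μ t ∈ Icc 0 1 := by
  rw [cdfOf_eq_cdf]
  exact ⟨cdf_nonneg μ t, cdf_le_one μ t⟩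

section Quantile

variable (μ : Measure ℝ) [IsProbabilityMeasure μ]

theorem quantile_cdfOf_le_iff {u : ℝ} (hu : u ∈ Ioo 0 1) {t : ℝ} :
    quantile (cdfOf μ) u ≤ t ↔ u ≤ cdfOf μ t := by
  rw [cdfOf_eq_cdf]
  refine quantile_le_iff (monotone_cdf μ)
    (fun x => ((cdf μ).right_continuous x).mono Ioi_subset_Ici_self) ?_ ?_
  · exact ((tendsto_cdf_atBot μ).eventually (eventually_lt_nhds hu.1)).exists
  · exact ((tendsto_cdf_atTop μ).eventually (eventually_gt_nhds hu.2)).exists.imp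
      fun _ => le_of_lt

theorem monotoneOn_quantile_cdfOf : MonotoneOn (quantile (cdfOf μ)) (Ioo 0 1) :=
  fun _ hu _ hv huv => (quantile_cdfOf_le_iff μ hu).2 <|
    huv.trans ((quantile_cdfOf_le_iff μ hv).1 le_rfl)

theorem aemeasurable_quantile_cdfOf : AEMeasurable (quantile (cdfOf μ)) unif :=
  aemeasurable_restrict_of_monotoneOn measurableSet_Ioo (monotoneOn_quantile_cdfOf μ)

theorem quantile_cdfOf_preimage_Iic_ae_eq (t : ℝ) :
    quantile (cdfOf μ) ⁻¹' Iic t =ᵐ[unif] Iic (cdfOf μ t) := by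
  filter_upwards [ae_restrict_mem measurableSet_Ioo] with u hu
  exact propext (quantile_cdfOf_le_iff μ hu)

end Quantile

theorem unif_eq_restrict_Ioc : unif = volume.restrict (Ioc 0 1) :=
  Measure.restrict_congr_set Ioo_ae_eq_Ioc

instance : IsProbabilityMeasure unif :=
  ⟨by simp [unif, Real.volume_Ioo]⟩

theorem unif_Iic {a : ℝ} (ha : a ≤ 1) : unif (Iic a) = ENNReal.ofReal a := by
  rw [unif_eq_restrict_Ioc, Measure.restrict_apply measurableSet_Iic, Iic_inter_Ioc_of_le ha,
    Real.volume_Ioc, sub_zero]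

theorem Iic_symmDiff_Iic {α : Type*} [LinearOrder α] (a b : α) :
    Iic a ∆ Iic b = Ioc (min a b) (max a b) := by
  ext x
  simp only [Set.mem_symmDiff, mem_Iic, mem_Ioc]
  grind

theorem Ici_symmDiff_Ici {α : Type*} [LinearOrder α] (a b : α) :
    Ici a ∆ Ici b = Ico (min a b) (max a b) := by
  ext x
  simp only [Set.mem_symmDiff, mem_Ici, mem_Ico]
  grind

theorem unif_Iic_symmDiff_Iic {a b : ℝ} (ha : a ∈ Icc 0 1) (hb : b ∈ Icc 0 1) :
    unif (Iic a ∆ Iic b) = ENNReal.ofReal |a - b| := by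
  have hsub : Ioc (min a b) (max a b) ⊆ Ioc 0 1 :=
    Ioc_subset_Ioc (le_min ha.1 hb.1) (max_le ha.2 hb.2)
  rw [unif_eq_restrict_Ioc, Iic_symmDiff_Iic, Measure.restrict_eq_self _ hsub, Real.volume_Ioc,
    max_sub_min_eq_abs']

theorem map_quantile_cdfOf (μ : Measure ℝ) [IsProbabilityMeasure μ] :
    unif.map (quantile (cdfOf μ)) = μ := by
  have hQ := aemeasurable_quantile_cdfOf μ
  have := Measure.isProbabilityMeasure_map (μ := unif) hQ
  refine Measure.ext_of_Iic _ _ fun t => ?_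
  rw [Measure.map_apply_of_aemeasurable hQ measurableSet_Iic,
    measure_congr (quantile_cdfOf_preimage_Iic_ae_eq μ t), unif_Iic (cdfOf_mem_Icc μ t).2, cdfOf,
    ENNReal.ofReal_toReal (measure_ne_top μ _)]

def crossingSet (t : ℝ) : Set (ℝ × ℝ) := {p | p.1 ≤ t} ∆ {p | p.2 ≤ t}

theorem measurableSet_crossingSet (t : ℝ) : MeasurableSet (crossingSet t) :=
  (measurableSet_le measurable_fst measurable_const).symmDiff
    (measurableSet_le measurable_snd measurable_const)

theorem volume_setOf_mem_crossingSet (p : ℝ × ℝ) :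
    volume {t | p ∈ crossingSet t} = ENNReal.ofReal |p.1 - p.2| := by
  have : {t | p ∈ crossingSet t} = Ici p.1 ∆ Ici p.2 := rfl
  rw [this, Ici_symmDiff_Ici, Real.volume_Ico, max_sub_min_eq_abs']

theorem lintegral_ofReal_abs_sub_eq_lintegral_measure_crossingSet (π : Measure (ℝ × ℝ))
    [SFinite π] :
    ∫⁻ p, ENNReal.ofReal |p.1 - p.2| ∂π = ∫⁻ t, π (crossingSet t) := by
  have hS : MeasurableSet {q : (ℝ × ℝ) × ℝ | q.1 ∈ crossingSet q.2} :=
    (measurableSet_le measurable_fst.fst measurable_snd).symmDiff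
      (measurableSet_le measurable_fst.snd measurable_snd)
  calc ∫⁻ p, ENNReal.ofReal |p.1 - p.2| ∂π
      = π.prod volume {q | q.1 ∈ crossingSet q.2} := by
        simp_rw [Measure.prod_apply hS, ← volume_setOf_mem_crossingSet]
        rfl
    _ = ∫⁻ t, π (crossingSet t) := Measure.prod_apply_symm hS

theorem ofReal_abs_cdfOf_sub_le_measure_crossingSet (μ ν : Measure ℝ) (π : Measure (ℝ × ℝ))
    [IsFiniteMeasure π] (hπμ : π.map Prod.fst = μ) (hπν : π.map Prod.snd = ν) (t : ℝ) :
    ENNReal.ofReal |cdfOf μ t - cdfOf ν t| ≤ π (crossingSet t) := by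
  have hμ : cdfOf μ t = π.real {p | p.1 ≤ t} := by
    rw [cdfOf, ← hπμ, Measure.map_apply measurable_fst measurableSet_Iic]
    rfl
  have hν : cdfOf ν t = π.real {p | p.2 ≤ t} := by
    rw [cdfOf, ← hπν, Measure.map_apply measurable_snd measurableSet_Iic]
    rfl
  rw [hμ, hν, ← ofReal_measureReal]
  exact ENNReal.ofReal_le_ofReal <| abs_measureReal_sub_le_measureReal_symmDiff
    (measurableSet_le measurable_fst measurable_const).nullMeasurableSet
    (measurableSet_le measurable_snd measurable_const).nullMeasurableSet

theorem lintegral_abs_cdfOf_sub_le_of_coupling (μ ν : Measure ℝ) [IsProbabilityMeasure μ]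
    {π : Measure (ℝ × ℝ)} (hπμ : π.map Prod.fst = μ) (hπν : π.map Prod.snd = ν) :
    ∫⁻ t, ENNReal.ofReal |cdfOf μ t - cdfOf ν t| ≤ ∫⁻ p, ENNReal.ofReal |p.1 - p.2| ∂π := by
  have : IsProbabilityMeasure (π.map Prod.fst) := hπμ ▸ inferInstance
  have : IsProbabilityMeasure π := Measure.isProbabilityMeasure_of_map Prod.fst
  rw [lintegral_ofReal_abs_sub_eq_lintegral_measure_crossingSet]
  exact lintegral_mono (ofReal_abs_cdfOf_sub_le_measure_crossingSet μ ν π hπμ hπν)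

noncomputable def monotoneCoupling (μ ν : Measure ℝ) : Measure (ℝ × ℝ) :=
  unif.map fun u => (quantile (cdfOf μ) u, quantile (cdfOf ν) u)

section MonotoneCoupling

variable (μ ν : Measure ℝ) [IsProbabilityMeasure μ] [IsProbabilityMeasure ν]

theorem aemeasurable_quantile_cdfOf_prod :
    AEMeasurable (fun u => (quantile (cdfOf μ) u, quantile (cdfOf ν) u)) unif :=
  (aemeasurable_quantile_cdfOf μ).prodMk (aemeasurable_quantile_cdfOf ν)

theorem map_fst_monotoneCoupling : (monotoneCoupling μ ν).map Prod.fst = μ := by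
  rw [monotoneCoupling, AEMeasurable.map_map_of_aemeasurable measurable_fst.aemeasurable
    (aemeasurable_quantile_cdfOf_prod μ ν)]
  exact map_quantile_cdfOf μ

theorem map_snd_monotoneCoupling : (monotoneCoupling μ ν).map Prod.snd = ν := by
  rw [monotoneCoupling, AEMeasurable.map_map_of_aemeasurable measurable_snd.aemeasurable
    (aemeasurable_quantile_cdfOf_prod μ ν)]
  exact map_quantile_cdfOf ν

theorem monotoneCoupling_crossingSet (t : ℝ) :
    monotoneCoupling μ ν (crossingSet t) = ENNReal.ofReal |cdfOf μ t - cdfOf ν t| := by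
  rw [monotoneCoupling, Measure.map_apply_of_aemeasurable (aemeasurable_quantile_cdfOf_prod μ ν)
      (measurableSet_crossingSet t)]
  change unif ((quantile (cdfOf μ) ⁻¹' Iic t) ∆ (quantile (cdfOf ν) ⁻¹' Iic t)) = _
  rw [measure_congr ((quantile_cdfOf_preimage_Iic_ae_eq μ t).symmDiff
      (quantile_cdfOf_preimage_Iic_ae_eq ν t)),
    unif_Iic_symmDiff_Iic (cdfOf_mem_Icc μ t) (cdfOf_mem_Icc ν t)]

instance : IsProbabilityMeasure (monotoneCoupling μ ν) :=
  Measure.isProbabilityMeasure_map (aemeasurable_quantile_cdfOf_prod μ ν)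

theorem lintegral_monotoneCoupling :
    ∫⁻ p, ENNReal.ofReal |p.1 - p.2| ∂monotoneCoupling μ ν =
      ∫⁻ t, ENNReal.ofReal |cdfOf μ t - cdfOf ν t| := by
  rw [lintegral_ofReal_abs_sub_eq_lintegral_measure_crossingSet]
  exact lintegral_congr (monotoneCoupling_crossingSet μ ν)

end MonotoneCoupling

theorem monotone_coupling_optimal_general (μ ν : Measure ℝ)
    [IsProbabilityMeasure μ] [IsProbabilityMeasure ν] :
    (unif.map (fun u => (quantile (cdfOf μ) u, quantile (cdfOf ν) u))).map Prod.fst = μ ∧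
    (unif.map (fun u => (quantile (cdfOf μ) u, quantile (cdfOf ν) u))).map Prod.snd = ν ∧
    ∫⁻ p, ENNReal.ofReal |p.1 - p.2|
        ∂(unif.map (fun u => (quantile (cdfOf μ) u, quantile (cdfOf ν) u))) = W1 μ ν := by
  have hfst := map_fst_monotoneCoupling μ ν
  have hsnd := map_snd_monotoneCoupling μ ν
  refine ⟨hfst, hsnd, le_antisymm (le_iInf₂ ?_) (iInf₂_le _ ⟨hfst, hsnd⟩)⟩
  rintro π ⟨hπμ, hπν⟩
  exact (lintegral_monotoneCoupling μ ν).trans_le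
    (lintegral_abs_cdfOf_sub_le_of_coupling μ ν hπμ hπν)

theorem monotone_coupling_optimal (μ ν : Measure ℝ)
    [IsProbabilityMeasure μ] [IsProbabilityMeasure ν]
    (hμ : Integrable id μ) (hν : Integrable id ν) :
    (unif.map (fun u => (quantile (cdfOf μ) u, quantile (cdfOf ν) u))).map Prod.fst = μ ∧
    (unif.map (fun u => (quantile (cdfOf μ) u, quantile (cdfOf ν) u))).map Prod.snd = ν ∧
    ∫⁻ p, ENNReal.ofReal |p.1 - p.2|
        ∂(unif.map (fun u => (quantile (cdfOf μ) u, quantile (cdfOf ν) u))) = W1 μ ν :=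
  monotone_coupling_optimal_general μ ν
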